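/- Let 0 < a < b, μ > 0 and α > 0. Let u : ℝ² → ℝ² be twice continuously differentiable and P : ℝ² → ℝ continuously differentiable on a neighborhood of the closed annulus {x : a ≤ |x| ≤ b}, satisfying on Ω: div u = 0 and (u·∇)u = μΔu − ∇P; suppose u(x)·x = 0 whenever |x| ∈ {a, b}, that ∂₁u₂(x) − ∂₂u₁(x) = 0 whenever |x| = b, and that u satisfies the Navier-slip condition on |x| = a. Then μ ∫_Ω Σ_{i,j=1}² (∂ᵢuⱼ(x))² dx + (μ/b) ∮_{∂B(0,b)} u_τ² ds = (α − μ/a) ∮_{∂B(0,a)} u_τ² ds. Consequently, if α ≤ μ/a then u vanishes identically on Ω. -/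

import Mathlib

open Real MeasureTheory

noncomputable section

/-- Partial derivative `∂₁ f` of a scalar function on `ℝ²`. -/
def pd1 (f : ℝ × ℝ → ℝ) : ℝ × ℝ → ℝ := fun x => fderiv ℝ f x (1, 0)

/-- Partial derivative `∂₂ f` of a scalar function on `ℝ²`. -/
def pd2 (f : ℝ × ℝ → ℝ) : ℝ × ℝ → ℝ := fun x => fderiv ℝ f x (0, 1)

/-- First component of a vector field on `ℝ²`. -/
def cmp1 (v : ℝ × ℝ → ℝ × ℝ) : ℝ × ℝ → ℝ := fun x => (v x).1

/-- Second component of a vector field on `ℝ²`. -/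
def cmp2 (v : ℝ × ℝ → ℝ × ℝ) : ℝ × ℝ → ℝ := fun x => (v x).2

/-- The open annulus `Ω = {x ∈ ℝ² : a < |x| < b}`. -/
def ann (a b : ℝ) : Set (ℝ × ℝ) := {x | a ^ 2 < x.1 ^ 2 + x.2 ^ 2 ∧ x.1 ^ 2 + x.2 ^ 2 < b ^ 2}

/-- The closed annulus `{x ∈ ℝ² : a ≤ |x| ≤ b}`. -/
def cann (a b : ℝ) : Set (ℝ × ℝ) := {x | a ^ 2 ≤ x.1 ^ 2 + x.2 ^ 2 ∧ x.1 ^ 2 + x.2 ^ 2 ≤ b ^ 2}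

/-- The circle `∂B(0, r) = {x ∈ ℝ² : |x| = r}`. -/
def circ (r : ℝ) : Set (ℝ × ℝ) := {x | x.1 ^ 2 + x.2 ^ 2 = r ^ 2}

/-- Boundary integral `∮_{∂B(0,r)} f ds = ∫₀^{2π} f(r cos θ, r sin θ) r dθ`. -/
def bInt (r : ℝ) (f : ℝ × ℝ → ℝ) : ℝ :=
  ∫ θ in (0 : ℝ)..(2 * π), f (r * Real.cos θ, r * Real.sin θ) * r

/-- Tangential component `v_τ(x) = v(x)·(x₂, −x₁)/r` on the circle of radius `r`. -/
def tang (r : ℝ) (v : ℝ × ℝ → ℝ × ℝ) : ℝ × ℝ → ℝ :=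
  fun x => ((v x).1 * x.2 - (v x).2 * x.1) / r

/-- The Navier-slip condition on the inner circle `|x| = a`:
`μ Σ_{i,j} τ_i(x) n_j(x) (∂_i v_j(x) + ∂_j v_i(x)) = α v(x)·τ(x)` for all `|x| = a`,
where `n(x) = −x/a` and `τ(x) = (x₂, −x₁)/a`. -/
def navierSlip (μ α a : ℝ) (v : ℝ × ℝ → ℝ × ℝ) : Prop :=
  ∀ x : ℝ × ℝ, x.1 ^ 2 + x.2 ^ 2 = a ^ 2 →
    μ * ((x.2 / a) * (-(x.1 / a)) * (pd1 (cmp1 v) x + pd1 (cmp1 v) x)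
       + (x.2 / a) * (-(x.2 / a)) * (pd1 (cmp2 v) x + pd2 (cmp1 v) x)
       + (-(x.1 / a)) * (-(x.1 / a)) * (pd2 (cmp1 v) x + pd1 (cmp2 v) x)
       + (-(x.1 / a)) * (-(x.2 / a)) * (pd2 (cmp2 v) x + pd2 (cmp2 v) x))
    = α * ((v x).1 * (x.2 / a) + (v x).2 * (-(x.1 / a)))

/-!
The energy flux `W = μ ∇(|u|²/2) - (|u|²/2 + P) u` of a steady Navier–Stokes flow satisfies
`div W = μ |∇u|²` once `div u = 0` and the momentum equation are used. Integrating over the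
annulus (in polar coordinates, where the annulus becomes the rectangle `[a, b] × [-π, π]` and
`r div F = ∂_r (r F_r) + ∂_θ F_θ`) turns `μ ∫ |∇u|²` into the normal flux of `W`
through the two circles. Since `u · x = 0` there, `u` is tangential, and differentiating
`u · x = 0` along the circle expresses the normal derivative of the tangential velocity through
the curl (outer circle) or through the Navier-slip condition (inner circle); this evaluates the
two fluxes as `-(μ/b) u_τ²` and `(μ/a - α) u_τ²`. If `α ≤ μ/a`, all terms of the identity have
a sign, so `∇u = 0`; `u` is then constant on the connected annulus, and being tangent to the
outer circle at two orthogonal points it vanishes.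
-/

open Set Filter Topology

theorem fderiv_apply_eq_pd (f : ℝ × ℝ → ℝ) (x v : ℝ × ℝ) :
    fderiv ℝ f x v = v.1 * pd1 f x + v.2 * pd2 f x := by
  conv_lhs => rw [show v = v.1 • ((1 : ℝ), (0 : ℝ)) + v.2 • ((0 : ℝ), (1 : ℝ)) by simp]
  rw [map_add, map_smul, map_smul, smul_eq_mul, smul_eq_mul, pd1, pd2]

theorem hasDerivAt_comp_prodMk {f : ℝ × ℝ → ℝ} {γ₁ γ₂ : ℝ → ℝ} {d₁ d₂ t : ℝ}
    (hf : DifferentiableAt ℝ f (γ₁ t, γ₂ t)) (h₁ : HasDerivAt γ₁ d₁ t) (h₂ : HasDerivAt γ₂ d₂ t) :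
    HasDerivAt (fun s => f (γ₁ s, γ₂ s))
      (d₁ * pd1 f (γ₁ t, γ₂ t) + d₂ * pd2 f (γ₁ t, γ₂ t)) t := by
  have h := hf.hasFDerivAt.comp_hasDerivAt t (h₁.prodMk h₂)
  rwa [fderiv_apply_eq_pd] at h

theorem pd1_eq_of_hasDerivAt {f : ℝ × ℝ → ℝ} {p : ℝ × ℝ} {d : ℝ} (hf : DifferentiableAt ℝ f p)
    (h : HasDerivAt (fun r => f (r, p.2)) d p.1) : pd1 f p = d :=
  (hf.hasFDerivAt.comp_hasDerivAt p.1 ((hasDerivAt_id _).prodMk (hasDerivAt_const _ _))).unique h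

theorem pd2_eq_of_hasDerivAt {f : ℝ × ℝ → ℝ} {p : ℝ × ℝ} {d : ℝ} (hf : DifferentiableAt ℝ f p)
    (h : HasDerivAt (fun θ => f (p.1, θ)) d p.2) : pd2 f p = d :=
  (hf.hasFDerivAt.comp_hasDerivAt p.2 ((hasDerivAt_const _ _).prodMk (hasDerivAt_id _))).unique h

theorem ContDiffAt.pd1 {f : ℝ × ℝ → ℝ} {x : ℝ × ℝ} {m n : WithTop ℕ∞} (hf : ContDiffAt ℝ n f x)
    (hmn : m + 1 ≤ n) : ContDiffAt ℝ m (pd1 f) x :=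
  (hf.fderiv_right hmn).clm_apply contDiffAt_const

theorem ContDiffAt.pd2 {f : ℝ × ℝ → ℝ} {x : ℝ × ℝ} {m n : WithTop ℕ∞} (hf : ContDiffAt ℝ n f x)
    (hmn : m + 1 ≤ n) : ContDiffAt ℝ m (pd2 f) x :=
  (hf.fderiv_right hmn).clm_apply contDiffAt_const

section GradNormSq

variable {u : ℝ × ℝ → ℝ × ℝ} {x : ℝ × ℝ}

def gradNormSq (u : ℝ × ℝ → ℝ × ℝ) (x : ℝ × ℝ) : ℝ :=
  (pd1 (cmp1 u) x) ^ 2 + (pd1 (cmp2 u) x) ^ 2 + (pd2 (cmp1 u) x) ^ 2 + (pd2 (cmp2 u) x) ^ 2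

theorem gradNormSq_nonneg (u : ℝ × ℝ → ℝ × ℝ) (x : ℝ × ℝ) : 0 ≤ gradNormSq u x := by
  unfold gradNormSq
  positivity

theorem ContDiffAt.continuousAt_gradNormSq (hu : ContDiffAt ℝ 1 u x) :
    ContinuousAt (gradNormSq u) x := by
  have h₁₁ := (hu.fst.pd1 (m := 0) le_rfl).continuousAt
  have h₁₂ := (hu.fst.pd2 (m := 0) le_rfl).continuousAt
  have h₂₁ := (hu.snd.pd1 (m := 0) le_rfl).continuousAt
  have h₂₂ := (hu.snd.pd2 (m := 0) le_rfl).continuousAt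
  unfold gradNormSq
  fun_prop

theorem fderiv_eq_zero_of_gradNormSq_eq_zero (hu : DifferentiableAt ℝ u x)
    (h : gradNormSq u x = 0) : fderiv ℝ u x = 0 := by
  simp only [gradNormSq] at h
  have h₁₁ : pd1 (cmp1 u) x = 0 := by nlinarith
  have h₁₂ : pd2 (cmp1 u) x = 0 := by nlinarith
  have h₂₁ : pd1 (cmp2 u) x = 0 := by nlinarith
  have h₂₂ : pd2 (cmp2 u) x = 0 := by nlinarith
  refine ContinuousLinearMap.ext fun v => Prod.ext ?_ ?_
  · change (ContinuousLinearMap.fst ℝ ℝ ℝ ∘L fderiv ℝ u x) v = 0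
    rw [← fderiv.fst hu, show (fun y => (u y).1) = cmp1 u from rfl, fderiv_apply_eq_pd, h₁₁, h₁₂]
    ring
  · change (ContinuousLinearMap.snd ℝ ℝ ℝ ∘L fderiv ℝ u x) v = 0
    rw [← fderiv.snd hu, show (fun y => (u y).2) = cmp2 u from rfl, fderiv_apply_eq_pd, h₂₁, h₂₂]
    ring

end GradNormSq

theorem polar_sq_add_sq (r θ : ℝ) : (r * cos θ) ^ 2 + (r * sin θ) ^ 2 = r ^ 2 := by
  linear_combination r ^ 2 * sin_sq_add_cos_sq θ

theorem polar_mem_circ (r θ : ℝ) : (r * cos θ, r * sin θ) ∈ circ r :=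
  polar_sq_add_sq r θ

theorem polarCoord_symm_polarCoord (x : ℝ × ℝ) : polarCoord.symm (polarCoord x) = x := by
  have h : √(x.1 ^ 2 + x.2 ^ 2) = ‖(x.1 + x.2 * Complex.I : ℂ)‖ := by
    rw [Complex.norm_def, Complex.normSq_add_mul_I]
  ext <;> simp [h]

section Annulus

variable {a b : ℝ}

theorem isOpen_ann (a b : ℝ) : IsOpen (ann a b) :=
  isOpen_Ioo.preimage (f := fun x : ℝ × ℝ => x.1 ^ 2 + x.2 ^ 2) (by fun_prop)

theorem isCompact_cann (a b : ℝ) : IsCompact (cann a b) := by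
  have hclosed : IsClosed (cann a b) :=
    isClosed_Icc.preimage (f := fun x : ℝ × ℝ => x.1 ^ 2 + x.2 ^ 2) (by fun_prop)
  refine ((isCompact_Icc (a := -|b|) (b := |b|)).prod
    (isCompact_Icc (a := -|b|) (b := |b|))).of_isClosed_subset hclosed fun x hx => ?_
  have h₁ : x.1 ^ 2 ≤ |b| ^ 2 := by rw [sq_abs]; nlinarith [hx.2, sq_nonneg x.2]
  have h₂ : x.2 ^ 2 ≤ |b| ^ 2 := by rw [sq_abs]; nlinarith [hx.2, sq_nonneg x.1]
  exact ⟨abs_le_of_sq_le_sq' h₁ (abs_nonneg b), abs_le_of_sq_le_sq' h₂ (abs_nonneg b)⟩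

theorem polar_mem_ann (ha : 0 ≤ a) {r : ℝ} (hr : r ∈ Ioo a b) (θ : ℝ) :
    (r * cos θ, r * sin θ) ∈ ann a b := by
  simp only [ann, mem_ofPred_eq, polar_sq_add_sq]
  exact ⟨pow_lt_pow_left₀ hr.1 ha two_ne_zero,
    pow_lt_pow_left₀ hr.2 (ha.trans hr.1.le) two_ne_zero⟩

theorem polar_mem_cann (ha : 0 ≤ a) {r : ℝ} (hr : r ∈ Icc a b) (θ : ℝ) :
    (r * cos θ, r * sin θ) ∈ cann a b := by
  simp only [cann, mem_ofPred_eq, polar_sq_add_sq]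
  exact ⟨pow_le_pow_left₀ ha hr.1 2, pow_le_pow_left₀ (ha.trans hr.1) hr.2 2⟩

theorem circ_subset_cann (ha : 0 ≤ a) {r : ℝ} (hr : r ∈ Icc a b) : circ r ⊆ cann a b :=
  fun x (hx : x.1 ^ 2 + x.2 ^ 2 = r ^ 2) =>
    ⟨hx ▸ pow_le_pow_left₀ ha hr.1 2, hx ▸ pow_le_pow_left₀ (ha.trans hr.1) hr.2 2⟩

theorem polarCoord_target_inter_preimage_ann (ha : 0 ≤ a) (hab : a ≤ b) :
    polarCoord.target ∩ polarCoord.symm ⁻¹' ann a b = Ioo a b ×ˢ Ioo (-π) π := by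
  ext ⟨r, θ⟩
  simp only [polarCoord_target, mem_inter_iff, mem_prod, mem_Ioi, mem_preimage,
    polarCoord_symm_apply, ann, mem_ofPred_eq, polar_sq_add_sq, mem_Ioo]
  constructor
  · rintro ⟨⟨hr, hθ⟩, ha2, hb2⟩
    exact ⟨⟨lt_of_pow_lt_pow_left₀ 2 hr.le ha2, lt_of_pow_lt_pow_left₀ 2 (ha.trans hab) hb2⟩, hθ⟩
  · rintro ⟨⟨har, hrb⟩, hθ⟩
    exact ⟨⟨ha.trans_lt har, hθ⟩, pow_lt_pow_left₀ har ha two_ne_zero,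
      pow_lt_pow_left₀ hrb (ha.trans har.le) two_ne_zero⟩

theorem isPreconnected_ann (ha : 0 ≤ a) (hab : a ≤ b) : IsPreconnected (ann a b) := by
  have h : (fun p : ℝ × ℝ => (p.1 * cos p.2, p.1 * sin p.2)) '' (Ioo a b ×ˢ univ) = ann a b := by
    refine Subset.antisymm (image_subset_iff.2 fun p hp => polar_mem_ann ha hp.1 p.2) ?_
    intro x hx
    refine ⟨polarCoord x, ⟨?_, mem_univ _⟩, polarCoord_symm_polarCoord x⟩
    exact ⟨Real.lt_sqrt ha |>.2 hx.1,
      (Real.sqrt_lt_sqrt (by positivity) hx.2).trans_eq (Real.sqrt_sq (ha.trans hab))⟩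
  rw [← h]
  exact (isPreconnected_Ioo.prod isPreconnected_univ).image _
    (by fun_prop : Continuous fun p : ℝ × ℝ => (p.1 * cos p.2, p.1 * sin p.2)).continuousOn

theorem circ_subset_closure_ann (ha : 0 ≤ a) (hab : a < b) : circ b ⊆ closure (ann a b) := by
  intro x (hx : x.1 ^ 2 + x.2 ^ 2 = b ^ 2)
  have hb : 0 < b := ha.trans_lt hab
  have hlim : Tendsto (fun t : ℝ => t • x) (𝓝[<] 1) (𝓝 x) := by
    have h : Continuous fun t : ℝ => t • x := continuous_id.smul continuous_const
    simpa using (h.tendsto 1).mono_left nhdsWithin_le_nhds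
  refine mem_closure_of_tendsto hlim ?_
  filter_upwards [Ioo_mem_nhdsLT (div_lt_one hb |>.2 hab)] with t ht
  have ht0 : 0 < t := (div_nonneg ha hb.le).trans_lt ht.1
  have hsq : (t • x).1 ^ 2 + (t • x).2 ^ 2 = (t * b) ^ 2 := by
    simp only [Prod.smul_fst, Prod.smul_snd, smul_eq_mul]
    linear_combination t ^ 2 * hx
  simp only [ann, mem_ofPred_eq, hsq]
  constructor
  · exact pow_lt_pow_left₀ ((div_lt_iff₀ hb).1 ht.1) ha two_ne_zero
  · exact pow_lt_pow_left₀ (by nlinarith [ht.2]) (by positivity) two_ne_zero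

theorem setIntegral_ann_eq_polar (ha : 0 ≤ a) (hab : a ≤ b) (g : ℝ × ℝ → ℝ) :
    ∫ x in ann a b, g x = ∫ p in Icc (a, -π) (b, π), p.1 * g (p.1 * cos p.2, p.1 * sin p.2) := by
  have hpre : MeasurableSet (polarCoord.symm ⁻¹' ann a b) :=
    (isOpen_ann a b).measurableSet.preimage continuous_polarCoord_symm.measurable
  have hrect : Ioo a b ×ˢ Ioo (-π) π =ᵐ[volume] Icc (a, -π) (b, π) := by
    rw [← Icc_prod_Icc, Measure.volume_eq_prod]
    exact Measure.set_prod_ae_eq Ioo_ae_eq_Icc Ioo_ae_eq_Icc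
  rw [← integral_indicator (isOpen_ann a b).measurableSet, ← integral_comp_polarCoord_symm,
    ← setIntegral_congr_set hrect, ← polarCoord_target_inter_preimage_ann ha hab,
    ← setIntegral_indicator hpre]
  congr 1 with p
  by_cases hp : polarCoord.symm p ∈ ann a b
  · rw [indicator_of_mem hp, indicator_of_mem (mem_preimage.2 hp), smul_eq_mul]
    rfl
  · rw [indicator_of_notMem hp, indicator_of_notMem (mt mem_preimage.1 hp), smul_zero]

end Annulus

section BoundaryIntegral

variable {r : ℝ} {f g : ℝ × ℝ → ℝ}

theorem bInt_eq_integral_neg_pi_pi (r : ℝ) (f : ℝ × ℝ → ℝ) :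
    bInt r f = ∫ θ in (-π)..π, f (r * cos θ, r * sin θ) * r := by
  have hper : Function.Periodic (fun θ => f (r * cos θ, r * sin θ) * r) (2 * π) := by
    intro θ
    simp [cos_add_two_pi, sin_add_two_pi]
  simpa [bInt, show -π + 2 * π = π by ring] using hper.intervalIntegral_add_eq 0 (-π)

theorem bInt_congr (h : ∀ x ∈ circ r, f x = g x) : bInt r f = bInt r g :=
  intervalIntegral.integral_congr fun θ _ => by
    rw [h _ (polar_mem_circ r θ)]

theorem bInt_const_mul (r c : ℝ) (f : ℝ × ℝ → ℝ) :
    bInt r (fun x => c * f x) = c * bInt r f := by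
  simp only [bInt, mul_assoc, intervalIntegral.integral_const_mul]

theorem bInt_nonneg (hr : 0 ≤ r) (hf : ∀ x ∈ circ r, 0 ≤ f x) : 0 ≤ bInt r f :=
  intervalIntegral.integral_nonneg (by positivity) fun θ _ =>
    mul_nonneg (hf _ (polar_mem_circ r θ)) hr

end BoundaryIntegral

section Divergence

variable {a b : ℝ} {F : ℝ × ℝ → ℝ × ℝ}

/-- `r F_r`, as a function of the polar coordinates `p = (r, θ)`; `angularComponent F` is `F_θ`. -/
def radialFlux (F : ℝ × ℝ → ℝ × ℝ) (p : ℝ × ℝ) : ℝ :=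
  p.1 * ((F (p.1 * cos p.2, p.1 * sin p.2)).1 * cos p.2
    + (F (p.1 * cos p.2, p.1 * sin p.2)).2 * sin p.2)

def angularComponent (F : ℝ × ℝ → ℝ × ℝ) (p : ℝ × ℝ) : ℝ :=
  (F (p.1 * cos p.2, p.1 * sin p.2)).2 * cos p.2 - (F (p.1 * cos p.2, p.1 * sin p.2)).1 * sin p.2

theorem differentiableAt_radialFlux {p : ℝ × ℝ}
    (hF : DifferentiableAt ℝ F (p.1 * cos p.2, p.1 * sin p.2)) :
    DifferentiableAt ℝ (radialFlux F) p := by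
  unfold radialFlux
  fun_prop

theorem differentiableAt_angularComponent {p : ℝ × ℝ}
    (hF : DifferentiableAt ℝ F (p.1 * cos p.2, p.1 * sin p.2)) :
    DifferentiableAt ℝ (angularComponent F) p := by
  unfold angularComponent
  fun_prop

theorem pd1_radialFlux_add_pd2_angularComponent {p : ℝ × ℝ}
    (hF : DifferentiableAt ℝ F (p.1 * cos p.2, p.1 * sin p.2)) :
    pd1 (radialFlux F) p + pd2 (angularComponent F) p
      = p.1 * (pd1 (cmp1 F) (p.1 * cos p.2, p.1 * sin p.2)
          + pd2 (cmp2 F) (p.1 * cos p.2, p.1 * sin p.2)) := by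
  obtain ⟨r, θ⟩ := p
  have hF₁ : DifferentiableAt ℝ (cmp1 F) (r * cos θ, r * sin θ) := hF.fst
  have hF₂ : DifferentiableAt ℝ (cmp2 F) (r * cos θ, r * sin θ) := hF.snd
  have hc : HasDerivAt (fun t => t * cos θ) (cos θ) r := hasDerivAt_mul_const _
  have hs : HasDerivAt (fun t => t * sin θ) (sin θ) r := hasDerivAt_mul_const _
  have hrc : HasDerivAt (fun ψ => r * cos ψ) (-(r * sin θ)) θ := by
    simpa using (hasDerivAt_cos θ).const_mul r
  have hrs : HasDerivAt (fun ψ => r * sin ψ) (r * cos θ) θ := (hasDerivAt_sin θ).const_mul r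
  have hR := (hasDerivAt_id r).mul (((hasDerivAt_comp_prodMk hF₁ hc hs).mul_const (cos θ)).add
    ((hasDerivAt_comp_prodMk hF₂ hc hs).mul_const (sin θ)))
  have hA := ((hasDerivAt_comp_prodMk hF₂ hrc hrs).mul (hasDerivAt_cos θ)).sub
    ((hasDerivAt_comp_prodMk hF₁ hrc hrs).mul (hasDerivAt_sin θ))
  rw [pd1_eq_of_hasDerivAt (differentiableAt_radialFlux hF) hR,
    pd2_eq_of_hasDerivAt (differentiableAt_angularComponent hF) hA]
  simp only [id, Pi.add_apply, cmp1, cmp2]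
  linear_combination (r * (pd1 (cmp1 F) (r * cos θ, r * sin θ)
    + pd2 (cmp2 F) (r * cos θ, r * sin θ))) * sin_sq_add_cos_sq θ

theorem bInt_normal_eq_integral_radialFlux (r : ℝ) (F : ℝ × ℝ → ℝ × ℝ) :
    bInt r (fun x => ((F x).1 * x.1 + (F x).2 * x.2) / r)
      = ∫ θ in (-π)..π, radialFlux F (r, θ) := by
  rw [bInt_eq_integral_neg_pi_pi]
  refine intervalIntegral.integral_congr fun θ _ => ?_
  rcases eq_or_ne r 0 with rfl | hr
  · simp [radialFlux]
  · simp only [radialFlux]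
    field_simp

theorem integral_ann_divergence (ha : 0 ≤ a) (hab : a ≤ b)
    (hF : ∀ x ∈ cann a b, ContDiffAt ℝ 1 F x) :
    ∫ x in ann a b, (pd1 (cmp1 F) x + pd2 (cmp2 F) x)
      = bInt b (fun x => ((F x).1 * x.1 + (F x).2 * x.2) / b)
        - bInt a (fun x => ((F x).1 * x.1 + (F x).2 * x.2) / a) := by
  set R := Icc ((a, -π) : ℝ × ℝ) (b, π)
  have hFp : ∀ p ∈ R, ContDiffAt ℝ 1 F (p.1 * cos p.2, p.1 * sin p.2) :=
    fun p hp => hF _ (polar_mem_cann ha ⟨hp.1.1, hp.2.1⟩ p.2)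
  have hFd : ∀ p ∈ Ioo a b ×ˢ Ioo (-π) π, DifferentiableAt ℝ F (p.1 * cos p.2, p.1 * sin p.2) :=
    fun p hp => (hFp p ⟨⟨hp.1.1.le, hp.2.1.le⟩, hp.1.2.le, hp.2.2.le⟩).differentiableAt one_ne_zero
  have hdiv : ∀ p ∈ R, pd1 (radialFlux F) p + pd2 (angularComponent F) p
      = p.1 * (pd1 (cmp1 F) (p.1 * cos p.2, p.1 * sin p.2)
          + pd2 (cmp2 F) (p.1 * cos p.2, p.1 * sin p.2)) :=
    fun p hp => pd1_radialFlux_add_pd2_angularComponent ((hFp p hp).differentiableAt one_ne_zero)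
  have hcont : ContinuousOn (fun p : ℝ × ℝ => p.1 * (pd1 (cmp1 F) (p.1 * cos p.2, p.1 * sin p.2)
      + pd2 (cmp2 F) (p.1 * cos p.2, p.1 * sin p.2))) R := by
    intro p hp
    have h₁ := ((hFp p hp).fst.pd1 (m := 0) le_rfl).continuousAt
    have h₂ := ((hFp p hp).snd.pd2 (m := 0) le_rfl).continuousAt
    exact ContinuousAt.continuousWithinAt (by fun_prop)
  have hR : ContinuousOn (radialFlux F) R := fun p hp =>
    have := (hFp p hp).continuousAt
    ContinuousAt.continuousWithinAt (by unfold radialFlux; fun_prop)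
  have hA : ContinuousOn (angularComponent F) R := fun p hp =>
    have := (hFp p hp).continuousAt
    ContinuousAt.continuousWithinAt (by unfold angularComponent; fun_prop)
  have hper : ∀ r, angularComponent F (r, π) = angularComponent F (r, -π) := by
    simp [angularComponent]
  rw [setIntegral_ann_eq_polar ha hab, ← setIntegral_congr_fun measurableSet_Icc hdiv]
  refine (integral_divergence_prod_Icc_of_hasFDerivAt_of_le (radialFlux F) (angularComponent F)
    _ _ (a, -π) (b, π) (by simp [hab, pi_pos.le]) hR hA
    (fun p hp => (differentiableAt_radialFlux (hFd p hp)).hasFDerivAt)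
    (fun p hp => (differentiableAt_angularComponent (hFd p hp)).hasFDerivAt)
    ((hcont.integrableOn_compact isCompact_Icc).congr_fun (fun p hp => (hdiv p hp).symm)
      measurableSet_Icc)).trans ?_
  simp only [hper, sub_self, zero_add, bInt_normal_eq_integral_radialFlux]

end Divergence

section EnergyFlux

variable {μ α r : ℝ} {u : ℝ × ℝ → ℝ × ℝ} {P : ℝ × ℝ → ℝ} {x : ℝ × ℝ}

def bernoulliFunction (u : ℝ × ℝ → ℝ × ℝ) (P : ℝ × ℝ → ℝ) (x : ℝ × ℝ) : ℝ :=
  ((u x).1 ^ 2 + (u x).2 ^ 2) / 2 + P x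

/-- The energy flux `W = μ ∇(|u|²/2) - (|u|²/2 + P) u`. -/
def energyFlux (μ : ℝ) (u : ℝ × ℝ → ℝ × ℝ) (P : ℝ × ℝ → ℝ) (x : ℝ × ℝ) : ℝ × ℝ :=
  (μ * ((u x).1 * pd1 (cmp1 u) x + (u x).2 * pd1 (cmp2 u) x) - bernoulliFunction u P x * (u x).1,
    μ * ((u x).1 * pd2 (cmp1 u) x + (u x).2 * pd2 (cmp2 u) x) - bernoulliFunction u P x * (u x).2)

theorem contDiffAt_energyFlux (hu : ContDiffAt ℝ 2 u x) (hP : ContDiffAt ℝ 1 P x) :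
    ContDiffAt ℝ 1 (energyFlux μ u P) x := by
  have hu₁ : ContDiffAt ℝ 1 u x := hu.of_le one_le_two
  have h₁₁ : ContDiffAt ℝ 1 (pd1 (cmp1 u)) x := hu.fst.pd1 le_rfl
  have h₁₂ : ContDiffAt ℝ 1 (pd2 (cmp1 u)) x := hu.fst.pd2 le_rfl
  have h₂₁ : ContDiffAt ℝ 1 (pd1 (cmp2 u)) x := hu.snd.pd1 le_rfl
  have h₂₂ : ContDiffAt ℝ 1 (pd2 (cmp2 u)) x := hu.snd.pd2 le_rfl
  unfold energyFlux bernoulliFunction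
  fun_prop

theorem divergence_energyFlux (hu : ContDiffAt ℝ 2 u x) (hP : DifferentiableAt ℝ P x)
    (hdiv : pd1 (cmp1 u) x + pd2 (cmp2 u) x = 0)
    (heq1 : (u x).1 * pd1 (cmp1 u) x + (u x).2 * pd2 (cmp1 u) x
      = μ * (pd1 (pd1 (cmp1 u)) x + pd2 (pd2 (cmp1 u)) x) - pd1 P x)
    (heq2 : (u x).1 * pd1 (cmp2 u) x + (u x).2 * pd2 (cmp2 u) x
      = μ * (pd1 (pd1 (cmp2 u)) x + pd2 (pd2 (cmp2 u)) x) - pd2 P x) :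
    pd1 (cmp1 (energyFlux μ u P)) x + pd2 (cmp2 (energyFlux μ u P)) x = μ * gradNormSq u x := by
  have hu₁ : ContDiffAt ℝ 2 (cmp1 u) x := hu.fst
  have hu₂ : ContDiffAt ℝ 2 (cmp2 u) x := hu.snd
  have h₁ := (hu₁.differentiableAt two_ne_zero).hasFDerivAt
  have h₂ := (hu₂.differentiableAt two_ne_zero).hasFDerivAt
  have h₁₁ := ((hu₁.pd1 (m := 1) le_rfl).differentiableAt one_ne_zero).hasFDerivAt
  have h₁₂ := ((hu₁.pd2 (m := 1) le_rfl).differentiableAt one_ne_zero).hasFDerivAt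
  have h₂₁ := ((hu₂.pd1 (m := 1) le_rfl).differentiableAt one_ne_zero).hasFDerivAt
  have h₂₂ := ((hu₂.pd2 (m := 1) le_rfl).differentiableAt one_ne_zero).hasFDerivAt
  have hq := (((h₁.pow 2).add (h₂.pow 2)).mul_const 2⁻¹).add hP.hasFDerivAt
  have hW₁ : HasFDerivAt (cmp1 (energyFlux μ u P)) _ x :=
    (((h₁.mul h₁₁).add (h₂.mul h₂₁)).const_mul μ).sub (hq.mul h₁)
  have hW₂ : HasFDerivAt (cmp2 (energyFlux μ u P)) _ x :=
    (((h₁.mul h₁₂).add (h₂.mul h₂₂)).const_mul μ).sub (hq.mul h₂)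
  rw [pd1, pd2, hW₁.fderiv, hW₂.fderiv]
  simp only [gradNormSq, pd1, pd2] at hdiv heq1 heq2 ⊢
  simp only [cmp1, cmp2, smul_add, Pi.add_apply, Nat.add_one_sub_one, pow_one, nsmul_eq_mul,
    Nat.cast_ofNat, sub_apply, add_apply, smul_apply, smul_eq_mul]
  linear_combination (-(u x).1) * heq1 - (u x).2 * heq2
    - (((u x).1 ^ 2 + (u x).2 ^ 2) / 2 + P x) * hdiv

/-- Differentiating `u · y = 0` along the rotation `t ↦ R_t x` of the circle. -/
theorem tangential_derivative_of_tangent (hu : DifferentiableAt ℝ u x) (hx : x ∈ circ r)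
    (htan : ∀ y ∈ circ r, (u y).1 * y.1 + (u y).2 * y.2 = 0) :
    x.1 * (x.1 * pd2 (cmp1 u) x - x.2 * pd1 (cmp1 u) x)
      + x.2 * (x.1 * pd2 (cmp2 u) x - x.2 * pd1 (cmp2 u) x)
      = (u x).1 * x.2 - (u x).2 * x.1 := by
  have hx' : x.1 ^ 2 + x.2 ^ 2 = r ^ 2 := hx
  let γ₁ : ℝ → ℝ := fun t => x.1 * cos t - x.2 * sin t
  let γ₂ : ℝ → ℝ := fun t => x.1 * sin t + x.2 * cos t
  have hγ : (γ₁ 0, γ₂ 0) = x := by simp [γ₁, γ₂]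
  have hγ₁ : HasDerivAt γ₁ (-x.2) 0 :=
    (((hasDerivAt_cos 0).const_mul x.1).sub ((hasDerivAt_sin 0).const_mul x.2)).congr_deriv
      (by simp)
  have hγ₂ : HasDerivAt γ₂ x.1 0 :=
    (((hasDerivAt_sin 0).const_mul x.1).add ((hasDerivAt_cos 0).const_mul x.2)).congr_deriv
      (by simp)
  have hu₁ : DifferentiableAt ℝ (cmp1 u) (γ₁ 0, γ₂ 0) := hγ ▸ hu.fst
  have hu₂ : DifferentiableAt ℝ (cmp2 u) (γ₁ 0, γ₂ 0) := hγ ▸ hu.snd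
  have hderiv := ((hasDerivAt_comp_prodMk hu₁ hγ₁ hγ₂).mul hγ₁).add
    ((hasDerivAt_comp_prodMk hu₂ hγ₁ hγ₂).mul hγ₂)
  have hzero : (fun t => cmp1 u (γ₁ t, γ₂ t) * γ₁ t + cmp2 u (γ₁ t, γ₂ t) * γ₂ t) = fun _ => 0 := by
    funext t
    refine htan _ ?_
    show γ₁ t ^ 2 + γ₂ t ^ 2 = r ^ 2
    linear_combination (x.1 ^ 2 + x.2 ^ 2) * sin_sq_add_cos_sq t + hx'
  have h := hderiv.unique (hzero ▸ hasDerivAt_const 0 0)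
  rw [hγ] at h
  simp only [γ₁, γ₂, cos_zero, sin_zero, mul_one, mul_zero, sub_zero, cmp1, cmp2] at h
  linear_combination h

theorem energyFlux_normal_mul_sq (hx : x ∈ circ r) (hn : (u x).1 * x.1 + (u x).2 * x.2 = 0) :
    ((energyFlux μ u P x).1 * x.1 + (energyFlux μ u P x).2 * x.2) * r ^ 2
      = μ * ((u x).1 * x.2 - (u x).2 * x.1)
        * (x.2 * (x.1 * pd1 (cmp1 u) x + x.2 * pd2 (cmp1 u) x)
          - x.1 * (x.1 * pd1 (cmp2 u) x + x.2 * pd2 (cmp2 u) x)) := by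
  have hx' : x.1 ^ 2 + x.2 ^ 2 = r ^ 2 := hx
  simp only [energyFlux]
  linear_combination (-μ * ((u x).1 * (x.1 * pd1 (cmp1 u) x + x.2 * pd2 (cmp1 u) x)
      + (u x).2 * (x.1 * pd1 (cmp2 u) x + x.2 * pd2 (cmp2 u) x))) * hx'
    + (μ * (x.1 * (x.1 * pd1 (cmp1 u) x + x.2 * pd2 (cmp1 u) x)
      + x.2 * (x.1 * pd1 (cmp2 u) x + x.2 * pd2 (cmp2 u) x)) - bernoulliFunction u P x * r ^ 2) * hn

theorem bInt_energyFlux_normal_of_curl_eq_zero (hr : r ≠ 0)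
    (hu : ∀ x ∈ circ r, DifferentiableAt ℝ u x)
    (htan : ∀ y ∈ circ r, (u y).1 * y.1 + (u y).2 * y.2 = 0)
    (hcurl : ∀ x ∈ circ r, pd1 (cmp2 u) x - pd2 (cmp1 u) x = 0) :
    bInt r (fun x => ((energyFlux μ u P x).1 * x.1 + (energyFlux μ u P x).2 * x.2) / r)
      = -(μ / r) * bInt r (fun x => tang r u x ^ 2) := by
  rw [← bInt_const_mul]
  refine bInt_congr fun x hx => ?_
  have ht := tangential_derivative_of_tangent (hu x hx) hx htan
  have hW := energyFlux_normal_mul_sq (μ := μ) (P := P) hx (htan x hx)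
  rw [show x.2 * (x.1 * pd1 (cmp1 u) x + x.2 * pd2 (cmp1 u) x)
      - x.1 * (x.1 * pd1 (cmp2 u) x + x.2 * pd2 (cmp2 u) x) = -((u x).1 * x.2 - (u x).2 * x.1) by
    linear_combination -ht - (x.1 ^ 2 + x.2 ^ 2) * hcurl x hx] at hW
  simp only [tang]
  field_simp
  linear_combination hW

theorem bInt_energyFlux_normal_of_navierSlip (hr : r ≠ 0)
    (hu : ∀ x ∈ circ r, DifferentiableAt ℝ u x)
    (htan : ∀ y ∈ circ r, (u y).1 * y.1 + (u y).2 * y.2 = 0) (hslip : navierSlip μ α r u) :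
    bInt r (fun x => ((energyFlux μ u P x).1 * x.1 + (energyFlux μ u P x).2 * x.2) / r)
      = (μ / r - α) * bInt r (fun x => tang r u x ^ 2) := by
  rw [← bInt_const_mul]
  refine bInt_congr fun x hx => ?_
  have ht := tangential_derivative_of_tangent (hu x hx) hx htan
  have hW := energyFlux_normal_mul_sq (μ := μ) (P := P) hx (htan x hx)
  have hs := hslip x hx
  field_simp at hs
  have hK : μ * (x.2 * (x.1 * pd1 (cmp1 u) x + x.2 * pd2 (cmp1 u) x)
      - x.1 * (x.1 * pd1 (cmp2 u) x + x.2 * pd2 (cmp2 u) x))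
      = (μ - α * r) * ((u x).1 * x.2 - (u x).2 * x.1) := by
    linear_combination μ * ht - hs
  simp only [tang]
  field_simp
  linear_combination hW + ((u x).1 * x.2 - (u x).2 * x.1) * hK

end EnergyFlux

section Vanishing

theorem IsOpen.eqOn_zero_of_setIntegral_eq_zero {X : Type*} [TopologicalSpace X]
    [MeasurableSpace X] [OpensMeasurableSpace X] {μ : Measure X} [μ.IsOpenPosMeasure]
    {s : Set X} {f : X → ℝ} (hs : IsOpen s) (hf : ContinuousOn f s) (hnn : ∀ x ∈ s, 0 ≤ f x)
    (hfi : IntegrableOn f s μ) (h0 : ∫ x in s, f x ∂μ = 0) : EqOn f 0 s :=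
  Measure.eqOn_open_of_ae_eq
    ((setIntegral_eq_zero_iff_of_nonneg_ae (ae_restrict_of_forall_mem hs.measurableSet hnn) hfi).1
      h0) hs hf continuousOn_const

variable {a b : ℝ} {u : ℝ × ℝ → ℝ × ℝ}

theorem eq_zero_on_ann_of_fderiv_eq_zero (ha : 0 ≤ a) (hab : a < b)
    (hu : ∀ x ∈ cann a b, DifferentiableAt ℝ u x) (hgrad : ∀ x ∈ ann a b, fderiv ℝ u x = 0)
    (htan : ∀ x ∈ circ b, (u x).1 * x.1 + (u x).2 * x.2 = 0) : ∀ x ∈ ann a b, u x = 0 := by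
  have hb : 0 < b := ha.trans_lt hab
  obtain ⟨c, hc⟩ := (isOpen_ann a b).exists_is_const_of_fderiv_eq_zero
    (isPreconnected_ann ha hab.le) (fun x hx => (hu x ⟨hx.1.le, hx.2.le⟩).differentiableWithinAt)
    hgrad
  have hcirc : ∀ x ∈ circ b, u x = c := fun x hx =>
    (hu x (circ_subset_cann ha ⟨hab.le, le_rfl⟩ hx)).continuousAt.continuousWithinAt
      |>.eq_const_of_mem_closure (circ_subset_closure_ann ha hab hx) hc
  have h₁ := htan (b, 0) (by simp [circ])
  have h₂ := htan (0, b) (by simp [circ])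
  rw [hcirc _ (by simp [circ])] at h₁
  rw [hcirc _ (by simp [circ])] at h₂
  intro x hx
  rw [hc x hx]
  ext
  · simpa [hb.ne'] using h₁
  · simpa [hb.ne'] using h₂

theorem eq_zero_on_ann_of_integral_gradNormSq_eq_zero (ha : 0 ≤ a) (hab : a < b)
    (hu : ∀ x ∈ cann a b, ContDiffAt ℝ 1 u x) (hI : ∫ x in ann a b, gradNormSq u x = 0)
    (htan : ∀ x ∈ circ b, (u x).1 * x.1 + (u x).2 * x.2 = 0) : ∀ x ∈ ann a b, u x = 0 := by
  have hsub : ann a b ⊆ cann a b := fun x hx => ⟨hx.1.le, hx.2.le⟩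
  have hcont : ContinuousOn (gradNormSq u) (cann a b) :=
    fun x hx => (hu x hx).continuousAt_gradNormSq.continuousWithinAt
  have hzero := (isOpen_ann a b).eqOn_zero_of_setIntegral_eq_zero (hcont.mono hsub)
    (fun x _ => gradNormSq_nonneg u x)
    ((hcont.integrableOn_compact (isCompact_cann a b)).mono_set hsub) hI
  exact eq_zero_on_ann_of_fderiv_eq_zero ha hab (fun x hx => (hu x hx).differentiableAt one_ne_zero)
    (fun x hx => fderiv_eq_zero_of_gradNormSq_eq_zero
      ((hu x (hsub hx)).differentiableAt one_ne_zero) (hzero hx)) htan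

end Vanishing

theorem steady_state_energy_identity_general (a b μ α : ℝ)
    (ha : 0 < a) (hab : a < b) (hμ : 0 < μ)
    (u : ℝ × ℝ → ℝ × ℝ) (P : ℝ × ℝ → ℝ)
    (U : Set (ℝ × ℝ)) (hU : IsOpen U) (hUc : cann a b ⊆ U)
    (hu : ContDiffOn ℝ 2 u U) (hP : ContDiffOn ℝ 1 P U)
    (hdiv : ∀ x ∈ ann a b, pd1 (cmp1 u) x + pd2 (cmp2 u) x = 0)
    (heq1 : ∀ x ∈ ann a b,
      (u x).1 * pd1 (cmp1 u) x + (u x).2 * pd2 (cmp1 u) x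
        = μ * (pd1 (pd1 (cmp1 u)) x + pd2 (pd2 (cmp1 u)) x) - pd1 P x)
    (heq2 : ∀ x ∈ ann a b,
      (u x).1 * pd1 (cmp2 u) x + (u x).2 * pd2 (cmp2 u) x
        = μ * (pd1 (pd1 (cmp2 u)) x + pd2 (pd2 (cmp2 u)) x) - pd2 P x)
    (htan : ∀ x : ℝ × ℝ, (x.1 ^ 2 + x.2 ^ 2 = a ^ 2 ∨ x.1 ^ 2 + x.2 ^ 2 = b ^ 2) →
      (u x).1 * x.1 + (u x).2 * x.2 = 0)
    (hcurl : ∀ x : ℝ × ℝ, x.1 ^ 2 + x.2 ^ 2 = b ^ 2 →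
      pd1 (cmp2 u) x - pd2 (cmp1 u) x = 0)
    (hns : navierSlip μ α a u) :
    (μ * ∫ x in ann a b,
        ((pd1 (cmp1 u) x) ^ 2 + (pd1 (cmp2 u) x) ^ 2
          + (pd2 (cmp1 u) x) ^ 2 + (pd2 (cmp2 u) x) ^ 2))
      + (μ / b) * bInt b (fun x => (tang b u x) ^ 2)
      = (α - μ / a) * bInt a (fun x => (tang a u x) ^ 2)
    ∧ (α ≤ μ / a → ∀ x ∈ ann a b, u x = 0) := by
  have hb : 0 < b := ha.trans hab
  have hu' : ∀ x ∈ cann a b, ContDiffAt ℝ 2 u x := fun x hx => hu.contDiffAt (hU.mem_nhds (hUc hx))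
  have hP' : ∀ x ∈ cann a b, ContDiffAt ℝ 1 P x := fun x hx => hP.contDiffAt (hU.mem_nhds (hUc hx))
  have hdu : ∀ r ∈ Icc a b, ∀ x ∈ circ r, DifferentiableAt ℝ u x := fun r hr x hx =>
    (hu' x (circ_subset_cann ha.le hr hx)).differentiableAt two_ne_zero
  have hflux := integral_ann_divergence ha.le hab.le fun x hx =>
    contDiffAt_energyFlux (μ := μ) (hu' x hx) (hP' x hx)
  rw [setIntegral_congr_fun (isOpen_ann a b).measurableSet fun x hx =>
      divergence_energyFlux (hu' x ⟨hx.1.le, hx.2.le⟩)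
        ((hP' x ⟨hx.1.le, hx.2.le⟩).differentiableAt one_ne_zero) (hdiv x hx) (heq1 x hx) (heq2 x hx),
    integral_const_mul,
    bInt_energyFlux_normal_of_curl_eq_zero hb.ne' (hdu b ⟨hab.le, le_rfl⟩)
      (fun y hy => htan y (Or.inr hy)) hcurl,
    bInt_energyFlux_normal_of_navierSlip ha.ne' (hdu a ⟨le_rfl, hab.le⟩)
      (fun y hy => htan y (Or.inl hy)) hns] at hflux
  refine ⟨by unfold gradNormSq at hflux; linarith, fun hαμ => ?_⟩
  refine eq_zero_on_ann_of_integral_gradNormSq_eq_zero ha.le hab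
    (fun x hx => (hu' x hx).of_le one_le_two) ?_ fun x hx => htan x (Or.inr hx)
  have hBb := bInt_nonneg hb.le fun x _ => sq_nonneg (tang b u x)
  have hBa := bInt_nonneg ha.le fun x _ => sq_nonneg (tang a u x)
  have hI := setIntegral_nonneg (μ := volume) (isOpen_ann a b).measurableSet
    fun x _ => gradNormSq_nonneg u x
  nlinarith [mul_nonpos_of_nonpos_of_nonneg (sub_nonpos.2 hαμ) hBa,
    mul_nonneg (div_pos hμ hb).le hBb]

/-- energy identity for steady solutions of the Navier–Stokes equations on the
annulus with free outer boundary and Navier-slip inner boundary, and the resulting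
triviality of steady states when `α ≤ μ/a`. -/
theorem steady_state_energy_identity (a b μ α : ℝ)
    (ha : 0 < a) (hab : a < b) (hμ : 0 < μ) (hα : 0 < α)
    (u : ℝ × ℝ → ℝ × ℝ) (P : ℝ × ℝ → ℝ)
    (U : Set (ℝ × ℝ)) (hU : IsOpen U) (hUc : cann a b ⊆ U)
    (hu : ContDiffOn ℝ 2 u U) (hP : ContDiffOn ℝ 1 P U)
    (hdiv : ∀ x ∈ ann a b, pd1 (cmp1 u) x + pd2 (cmp2 u) x = 0)
    (heq1 : ∀ x ∈ ann a b,
      (u x).1 * pd1 (cmp1 u) x + (u x).2 * pd2 (cmp1 u) x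
        = μ * (pd1 (pd1 (cmp1 u)) x + pd2 (pd2 (cmp1 u)) x) - pd1 P x)
    (heq2 : ∀ x ∈ ann a b,
      (u x).1 * pd1 (cmp2 u) x + (u x).2 * pd2 (cmp2 u) x
        = μ * (pd1 (pd1 (cmp2 u)) x + pd2 (pd2 (cmp2 u)) x) - pd2 P x)
    (htan : ∀ x : ℝ × ℝ, (x.1 ^ 2 + x.2 ^ 2 = a ^ 2 ∨ x.1 ^ 2 + x.2 ^ 2 = b ^ 2) →
      (u x).1 * x.1 + (u x).2 * x.2 = 0)
    (hcurl : ∀ x : ℝ × ℝ, x.1 ^ 2 + x.2 ^ 2 = b ^ 2 →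
      pd1 (cmp2 u) x - pd2 (cmp1 u) x = 0)
    (hns : navierSlip μ α a u) :
    (μ * ∫ x in ann a b,
        ((pd1 (cmp1 u) x) ^ 2 + (pd1 (cmp2 u) x) ^ 2
          + (pd2 (cmp1 u) x) ^ 2 + (pd2 (cmp2 u) x) ^ 2))
      + (μ / b) * bInt b (fun x => (tang b u x) ^ 2)
      = (α - μ / a) * bInt a (fun x => (tang a u x) ^ 2)
    ∧ (α ≤ μ / a → ∀ x ∈ ann a b, u x = 0) :=
  steady_state_energy_identity_general a b μ α ha hab hμ u P U hU hUc hu hP hdiv heq1 heq2 htan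
    hcurl hns
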